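/- arXiv:2312.06436 — 7 statements merged into one kernel-verified Lean document; each statement's English description precedes it below -/
import Mathlib

section
/- Let (Ω, F, p) be a probability space, J : Ω → ℝ a bounded measurable function, ε ≥ 0, and f : (0,∞) → ℝ a convex function with f(1) = 0, extended to 0 by f(0) = lim_{y→0⁺} f(y), with convex conjugate f*(x) = sup_{y>0}(x·y − f(y)). Then for every ν > 0, every η ∈ ℝ, and every measurable density z : Ω → [0,∞) with ∫_Ω z dp = 1 and ∫_Ω f(z) dp ≤ ε, one has ν·(η − ∫_Ω f*(η + ε − J/ν) dp) ≤ ∫_Ω z·J dp. In particular, the supremum of the left-hand side over ν > 0 and η ∈ ℝ is a lower bound for the expected cumulative reward under any f-divergence-bounded perturbation of p. -/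
open MeasureTheory Filter Set

/-- Convex conjugate of `f` restricted to positive arguments (real-valued `sSup`). -/
noncomputable def fStar (f : ℝ → ℝ) (x : ℝ) : ℝ :=
  sSup ((fun y => x * y - f y) '' Set.Ioi (0 : ℝ))

/-- **Weak duality (lower-bound certificate).** For every `ν > 0`, `η ∈ ℝ`, and
measurable density `z` with `∫ z dp = 1` and `∫ f(z) dp ≤ ε`, one has
`ν·(η − ∫ f*(η + ε − J/ν) dp) ≤ ∫ z·J dp`, so the dual objective is a lower
bound for the expected cumulative reward under any `f`-divergence-bounded
perturbation of `p`. -/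
theorem dual_objective_is_lower_bound
    {Ω : Type*} [MeasurableSpace Ω] (p : Measure Ω) [IsProbabilityMeasure p]
    (J : Ω → ℝ) (hJmeas : Measurable J) (C : ℝ) (hJbdd : ∀ ω, |J ω| ≤ C)
    (ε : ℝ) (hε : 0 ≤ ε)
    (f : ℝ → ℝ) (hfconv : ConvexOn ℝ (Set.Ioi 0) f)
    (hf1 : f 1 = 0)
    (hf0 : Tendsto f (nhdsWithin 0 (Set.Ioi 0)) (nhds (f 0)))
    (ν : ℝ) (hν : 0 < ν) (η : ℝ)
    -- the conjugate is finite and integrable at the relevant arguments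
    (hbdd : ∀ ω, BddAbove ((fun y => (η + ε - J ω / ν) * y - f y) '' Set.Ioi (0 : ℝ)))
    (hint : Integrable (fun ω => fStar f (η + ε - J ω / ν)) p)
    (z : Ω → ℝ) (hzmeas : Measurable z) (hznonneg : ∀ ω, 0 ≤ z ω)
    (hzone : (∫ ω, z ω ∂p) = 1)
    (hzint : Integrable (fun ω => f (z ω)) p)
    (hzdiv : (∫ ω, f (z ω) ∂p) ≤ ε) :
    ν * (η - ∫ ω, fStar f (η + ε - J ω / ν) ∂p) ≤ ∫ ω, z ω * J ω ∂p := by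
  -- z is integrable
  have hzint' : Integrable z p := by
    by_contra h
    rw [integral_undef h] at hzone
    norm_num at hzone
  -- z * J is integrable
  have hJz : Integrable (fun ω => z ω * J ω) p := by
    have h := hzint'.bdd_mul hJmeas.aestronglyMeasurable
      (c := C) (Filter.Eventually.of_forall fun ω => by simpa using hJbdd ω)
    simpa [mul_comm] using h
  -- pointwise key inequality
  have key : ∀ ω, (η + ε - J ω / ν) * z ω - f (z ω) ≤ fStar f (η + ε - J ω / ν) := by
    intro ω
    set x := η + ε - J ω / ν with hx
    rcases eq_or_lt_of_le (hznonneg ω) with h0 | hpos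
    · rw [← h0, mul_zero, zero_sub]
      have htend : Tendsto (fun y => x * y - f y) (nhdsWithin 0 (Set.Ioi 0))
          (nhds (-f 0)) := by
        have h1 : Tendsto (fun y : ℝ => x * y) (nhdsWithin 0 (Set.Ioi 0)) (nhds 0) := by
          have := (continuous_mul_left x).tendsto (0 : ℝ)
          simpa using this.mono_left nhdsWithin_le_nhds
        simpa using h1.sub hf0
      refine le_of_tendsto htend ?_
      filter_upwards [self_mem_nhdsWithin] with y hy
      exact le_csSup (hbdd ω) ⟨y, hy, rfl⟩
    · exact le_csSup (hbdd ω) ⟨z ω, hpos, rfl⟩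
  -- integrability of the lower envelope
  have hA : Integrable (fun ω => (η + ε - J ω / ν) * z ω) p := by
    have heq : (fun ω => (η + ε - J ω / ν) * z ω)
        = fun ω => (η + ε) * z ω - (z ω * J ω) / ν := by
      funext ω; field_simp
    rw [heq]
    exact (hzint'.const_mul _).sub (hJz.div_const _)
  have hmono : (∫ ω, ((η + ε - J ω / ν) * z ω - f (z ω)) ∂p)
      ≤ ∫ ω, fStar f (η + ε - J ω / ν) ∂p :=
    integral_mono (hA.sub hzint) hint key
  have hcompute : (∫ ω, ((η + ε - J ω / ν) * z ω - f (z ω)) ∂p)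
      = (η + ε) - (∫ ω, z ω * J ω ∂p) / ν - ∫ ω, f (z ω) ∂p := by
    rw [integral_sub hA hzint]
    congr 1
    have heq : (fun ω => (η + ε - J ω / ν) * z ω)
        = fun ω => (η + ε) * z ω - (z ω * J ω) / ν := by
      funext ω; field_simp
    rw [heq, integral_sub (hzint'.const_mul _) (hJz.div_const _),
      integral_const_mul, integral_div, hzone, mul_one]
  rw [hcompute] at hmono
  have hS := hmono
  nlinarith [mul_le_mul_of_nonneg_left hS hν.le,
    mul_le_mul_of_nonneg_left hzdiv hν.le,
    mul_div_cancel₀ (∫ ω, z ω * J ω ∂p) hν.ne']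
end

section
/- Let (Ω, F, p) be a probability space, J : Ω → ℝ measurable with a ≤ J ≤ b, and let a < g₁ < g₂ < … < gₙ ≤ b be thresholds. Define the discretized reward J_d : Ω → ℝ by J_d(ω) = a if J(ω) < g₁, J_d(ω) = g_i if g_i ≤ J(ω) < g_{i+1} (for 1 ≤ i ≤ n−1), and J_d(ω) = gₙ if J(ω) ≥ gₙ. Let f : (0,∞) → ℝ be convex with f(1) = 0 and conjugate f*(x) = sup_{y>0}(x·y − f(y)). Then for every ε ≥ 0, ν > 0 and η ∈ ℝ, ν·(η − ∫_Ω f*(η + ε − J_d/ν) dp) ≤ ν·(η − ∫_Ω f*(η + ε − J/ν) dp); that is, the CDF-based (threshold-discretized) certification objective is at most the direct certification objective. -/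
open MeasureTheory Set

/-- **The CDF-based (threshold-discretized) certification objective is at most the
direct certification objective.** Here `Jd` is the discretization of the reward `J`
along the thresholds `a < gs 1 < … < gs n ≤ b`: `Jd ω` is the largest threshold
(or `a`) not exceeding `J ω`. -/
theorem discretized_objective_le_direct_objective
    {Ω : Type*} [MeasurableSpace Ω] (p : Measure Ω) [IsProbabilityMeasure p]
    (J : Ω → ℝ) (hJmeas : Measurable J)
    (a b : ℝ) (hJab : ∀ ω, a ≤ J ω ∧ J ω ≤ b)
    (n : ℕ) (hn : 0 < n) (gs : ℕ → ℝ)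
    (hgmono : ∀ i, 1 ≤ i → i < n → gs i < gs (i + 1))
    (hga : a < gs 1) (hgb : gs n ≤ b)
    (Jd : Ω → ℝ)
    (hJd : ∀ ω, Jd ω = sSup (insert a (gs '' {i | 1 ≤ i ∧ i ≤ n ∧ gs i ≤ J ω})))
    (f : ℝ → ℝ) (hfconv : ConvexOn ℝ (Set.Ioi 0) f) (hf1 : f 1 = 0)
    (ε : ℝ) (hε : 0 ≤ ε) (ν : ℝ) (hν : 0 < ν) (η : ℝ)
    -- the conjugate is finite and integrable at the relevant arguments
    (hbdd : ∀ ω, BddAbove ((fun y => (η + ε - Jd ω / ν) * y - f y) '' Set.Ioi (0 : ℝ)))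
    (hint₁ : Integrable (fun ω => fStar f (η + ε - Jd ω / ν)) p)
    (hint₂ : Integrable (fun ω => fStar f (η + ε - J ω / ν)) p) :
    ν * (η - ∫ ω, fStar f (η + ε - Jd ω / ν) ∂p) ≤
      ν * (η - ∫ ω, fStar f (η + ε - J ω / ν) ∂p) := by
  have hJdle : ∀ ω, Jd ω ≤ J ω := by
    intro ω
    rw [hJd ω]
    apply csSup_le (insert_nonempty _ _)
    rintro x (rfl | ⟨i, ⟨_, _, hi⟩, rfl⟩)
    · exact (hJab ω).1
    · exact hi
  have hmono : ∀ ω, fStar f (η + ε - J ω / ν) ≤ fStar f (η + ε - Jd ω / ν) := by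
    intro ω
    apply csSup_le (nonempty_Ioi.image _)
    rintro x ⟨y, hy, rfl⟩
    refine le_trans ?_ (le_csSup (hbdd ω) ⟨y, hy, rfl⟩)
    have : (η + ε - J ω / ν) * y ≤ (η + ε - Jd ω / ν) * y := by
      apply mul_le_mul_of_nonneg_right _ (le_of_lt hy)
      have : Jd ω / ν ≤ J ω / ν := div_le_div_of_nonneg_right (hJdle ω) hν.le
      linarith
    linarith
  have hInt : ∫ ω, fStar f (η + ε - J ω / ν) ∂p ≤ ∫ ω, fStar f (η + ε - Jd ω / ν) ∂p :=
    integral_mono hint₂ hint₁ hmono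
  have := sub_le_sub_left hInt η
  exact mul_le_mul_of_nonneg_left this (le_of_lt hν)
end

section
/- Fix λ > 0 and define the hockey-stick generator f_λ : (0,∞) → ℝ by f_λ(y) = max(y − λ, 0) − max(1 − λ, 0). Then its convex conjugate f_λ*(x) = sup_{y>0}(x·y − f_λ(y)) satisfies: f_λ*(x) = λ·max(x, 0) + max(1 − λ, 0) for all x ≤ 1, and f_λ*(x) = +∞ for all x > 1. -/
open Set

/-- Convex conjugate of `f` restricted to positive arguments, valued in `ℝ ∪ {+∞}`
(`EReal`): `f*(x) = sup_{y > 0} (x·y − f(y))`. -/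
noncomputable def fStarE (f : ℝ → ℝ) (x : ℝ) : EReal :=
  ⨆ y ∈ Set.Ioi (0 : ℝ), ((x * y - f y : ℝ) : EReal)

/-- **Convex conjugate of the hockey-stick generator.** For `λ > 0` and
`f_λ(y) = max(y − λ, 0) − max(1 − λ, 0)`, the conjugate satisfies
`f_λ*(x) = λ·max(x,0) + max(1−λ,0)` for `x ≤ 1` and `f_λ*(x) = +∞` for `x > 1`. -/
theorem hockeyStick_conjugate (l : ℝ) (hl : 0 < l) :
    (∀ x : ℝ, x ≤ 1 →
        fStarE (fun y => max (y - l) 0 - max (1 - l) 0) x =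
          ((l * max x 0 + max (1 - l) 0 : ℝ) : EReal)) ∧
      (∀ x : ℝ, 1 < x →
        fStarE (fun y => max (y - l) 0 - max (1 - l) 0) x = ⊤) := by
  set c : ℝ := max (1 - l) 0 with hc
  constructor
  · intro x hx
    have hub : ∀ y ∈ Set.Ioi (0:ℝ),
        ((x * y - (max (y - l) 0 - c) : ℝ) : EReal) ≤
          ((l * max x 0 + c : ℝ) : EReal) := by
      intro y hy
      rw [EReal.coe_le_coe_iff]
      have hy0 : (0:ℝ) < y := hy
      rcases le_total x 0 with hx0 | hx0 <;> rcases le_total y l with hyl | hyl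
      · rw [max_eq_right (by linarith), max_eq_right hx0]
        nlinarith
      · rw [max_eq_left (by linarith), max_eq_right hx0]
        nlinarith
      · rw [max_eq_right (by linarith), max_eq_left hx0]
        nlinarith
      · rw [max_eq_left (by linarith), max_eq_left hx0]
        nlinarith
    apply le_antisymm
    · exact iSup₂_le hub
    · rcases le_total 0 x with hx0 | hx0
      · have hxm : max x 0 = x := max_eq_left hx0
        have : ((x * l - (max (l - l) 0 - c) : ℝ) : EReal) ≤
            fStarE (fun y => max (y - l) 0 - max (1 - l) 0) x :=
          le_iSup₂ (f := fun y (_ : y ∈ Set.Ioi (0:ℝ)) =>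
            ((x * y - (max (y - l) 0 - c) : ℝ) : EReal)) l hl
        refine le_trans (le_of_eq ?_) this
        rw [EReal.coe_eq_coe_iff]
        simp [hxm]
        ring
      · have hxm : max x 0 = 0 := max_eq_right hx0
        rw [hxm, mul_zero, zero_add]
        by_contra hcon
        push_neg at hcon
        set S := fStarE (fun y => max (y - l) 0 - max (1 - l) 0) x with hS
        have hlow : ∀ y ∈ Set.Ioi (0:ℝ),
            ((x * y - (max (y - l) 0 - c) : ℝ) : EReal) ≤ S := fun y hy =>
          le_iSup₂ (f := fun y (_ : y ∈ Set.Ioi (0:ℝ)) =>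
            ((x * y - (max (y - l) 0 - c) : ℝ) : EReal)) y hy
        have hSbot : ((x * l - (max (l - l) 0 - c) : ℝ) : EReal) ≤ S := hlow l hl
        have hne_bot : S ≠ ⊥ := by
          intro h
          rw [h, le_bot_iff] at hSbot
          exact EReal.coe_ne_bot _ hSbot
        have hne_top : S ≠ ⊤ := hcon.trans_le le_top |>.ne
        set s : ℝ := S.toReal with hs
        have hcoe : (s : EReal) = S := EReal.coe_toReal hne_top hne_bot
        have hsc : s < c := by
          rw [← hcoe] at hcon; exact_mod_cast hcon
        rcases eq_or_lt_of_le hx0 with hx0' | hx0'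
        · subst hx0'
          have := hlow l hl
          rw [← hcoe, EReal.coe_le_coe_iff] at this
          norm_num at this
          linarith
        · -- x < 0 : pick y small
          set y : ℝ := min l ((s - c) / (2 * x)) with hy
          have hsc' : s - c < 0 := by linarith
          have hypos : 0 < y := by
            apply lt_min hl
            apply div_pos_of_neg_of_neg hsc'
            linarith
          have hyl : y ≤ l := min_le_left _ _
          have := hlow y hypos
          rw [← hcoe, EReal.coe_le_coe_iff] at this
          rw [max_eq_right (by linarith)] at this
          -- this : x * y - (0 - c) ≤ s, i.e. x * y ≤ s - c
          have hxy : x * y ≤ s - c := by linarith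
          have hy2 : y ≤ (s - c) / (2 * x) := min_le_right _ _
          have h2x : 2 * x < 0 := by linarith
          have : x * y ≥ x * ((s - c) / (2 * x)) :=
            mul_le_mul_of_nonpos_left hy2 (le_of_lt hx0')
          have hxne : x ≠ 0 := ne_of_lt hx0'
          have hval : x * ((s - c) / (2 * x)) = (s - c) / 2 := by
            field_simp
          nlinarith
  · intro x hx
    by_contra hbt
    set S := fStarE (fun y => max (y - l) 0 - max (1 - l) 0) x with hS
    have hlow : ∀ y ∈ Set.Ioi (0:ℝ),
        ((x * y - (max (y - l) 0 - c) : ℝ) : EReal) ≤ S := fun y hy =>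
      le_iSup₂ (f := fun y (_ : y ∈ Set.Ioi (0:ℝ)) =>
        ((x * y - (max (y - l) 0 - c) : ℝ) : EReal)) y hy
    have h1 : ((x * l - (max (l - l) 0 - c) : ℝ) : EReal) ≤ S := hlow l hl
    have hne_bot : S ≠ ⊥ := by
      intro h
      rw [h, le_bot_iff] at h1
      exact EReal.coe_ne_bot _ h1
    set s : ℝ := S.toReal with hs
    have hcoe : (s : EReal) = S := EReal.coe_toReal hbt hne_bot
    set y : ℝ := max l ((s + 1 - l - c) / (x - 1)) with hy
    have hypos : 0 < y := lt_of_lt_of_le hl (le_max_left _ _)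
    have hyl : l ≤ y := le_max_left _ _
    have hy2 : (s + 1 - l - c) / (x - 1) ≤ y := le_max_right _ _
    have hx1 : 0 < x - 1 := by linarith
    have := hlow y hypos
    rw [← hcoe, EReal.coe_le_coe_iff] at this
    rw [max_eq_left (by linarith)] at this
    have hkey : s + 1 - l - c ≤ (x - 1) * y := by
      rw [div_le_iff₀ hx1] at hy2
      linarith
    nlinarith
end

section
/- Let (Ω, F, p) be a probability space, J : Ω → ℝ a bounded measurable function, λ > 0 and ε ≥ 0. Then for every ν > 0 and η ∈ ℝ satisfying η ≤ ν(1 − ε) + J(ω) for p-almost every ω, and every measurable density z : Ω → [0,∞) with ∫_Ω z dp = 1 and ∫_Ω f_λ(z) dp ≤ ε (where f_λ(y) = max(y − λ, 0) − max(1 − λ, 0)), one has η − ∫_Ω λ·max(η + ν·ε − J, 0) dp − ν·max(1 − λ, 0) ≤ ∫_Ω z·J dp. Hence the supremum of the left-hand side over such feasible (ν, η) is a lower bound on the mean cumulative reward under any hockey-stick-divergence-bounded perturbation. -/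
open MeasureTheory Set

/-- Fenchel-type pointwise inequality for the hockey-stick conjugate pair. -/
lemma hs_pointwise (l ν z a : ℝ) (hl : 0 < l) (hν : 0 < ν) (hz : 0 ≤ z)
    (ha : a ≤ ν) : z * a ≤ ν * max (z - l) 0 + l * max a 0 := by
  rcases le_or_gt a 0 with h | h
  · have h1 : max a 0 = 0 := max_eq_right h
    have h2 : 0 ≤ max (z - l) 0 := le_max_right _ _
    have h3 : z * a ≤ 0 := mul_nonpos_of_nonneg_of_nonpos hz h
    rw [h1]; nlinarith
  · have h1 : max a 0 = a := max_eq_left h.le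
    rw [h1]
    rcases le_or_gt z l with hzl | hzl
    · have h2 : 0 ≤ max (z - l) 0 := le_max_right _ _
      nlinarith
    · have h2 : max (z - l) 0 = z - l := max_eq_left (by linarith)
      rw [h2]; nlinarith

/-- **Hockey-stick certification bound (dual objective for `l₂` certification).**
For feasible `(ν, η)` and any density `z` whose hockey-stick divergence from `p`
is at most `ε`, the dual objective is a lower bound on the perturbed mean reward. -/
theorem hockeyStick_lower_bound
    {Ω : Type*} [MeasurableSpace Ω] (p : Measure Ω) [IsProbabilityMeasure p]
    (J : Ω → ℝ) (hJmeas : Measurable J) (C : ℝ) (hJbdd : ∀ ω, |J ω| ≤ C)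
    (l : ℝ) (hl : 0 < l) (ε : ℝ) (hε : 0 ≤ ε)
    (ν : ℝ) (hν : 0 < ν) (η : ℝ)
    (hfeas : ∀ᵐ ω ∂p, η ≤ ν * (1 - ε) + J ω)
    (z : Ω → ℝ) (hzmeas : Measurable z) (hznonneg : ∀ ω, 0 ≤ z ω)
    (hzone : (∫ ω, z ω ∂p) = 1)
    (hzdiv : (∫ ω, (max (z ω - l) 0 - max (1 - l) 0) ∂p) ≤ ε) :
    η - (∫ ω, l * max (η + ν * ε - J ω) 0 ∂p) - ν * max (1 - l) 0 ≤
      ∫ ω, z ω * J ω ∂p := by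
  -- integrability facts
  have hzint : Integrable z p := by
    by_contra h
    rw [integral_undef h] at hzone
    norm_num at hzone
  have hmaxz : Integrable (fun ω => max (z ω - l) 0) p := by
    refine hzint.mono ((hzmeas.sub measurable_const).max measurable_const).aestronglyMeasurable
      (Filter.Eventually.of_forall fun ω => ?_)
    simp only [Real.norm_eq_abs]
    rw [abs_of_nonneg (le_max_right _ _), abs_of_nonneg (hznonneg ω)]
    exact max_le (by linarith [hl.le]) (hznonneg ω)
  have hmaxJ : Integrable (fun ω => l * max (η + ν * ε - J ω) 0) p := by
    refine Integrable.mono' (integrable_const (l * (|η| + ν * ε + C)))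
      (((measurable_const.sub hJmeas).max measurable_const).const_mul l).aestronglyMeasurable
      (Filter.Eventually.of_forall fun ω => ?_)
    have hC : 0 ≤ C := (abs_nonneg _).trans (hJbdd ω)
    have hJ := abs_le.mp (hJbdd ω)
    have hη := le_abs_self η
    simp only [Real.norm_eq_abs]
    rw [abs_mul, abs_of_pos hl, abs_of_nonneg (le_max_right _ _)]
    have h2 : max (η + ν * ε - J ω) 0 ≤ |η| + ν * ε + C := by
      refine max_le (by nlinarith) (by nlinarith [abs_nonneg η, hν.le])
    exact mul_le_mul_of_nonneg_left h2 hl.le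
  have hzJ : Integrable (fun ω => z ω * J ω) p := by
    refine (hzint.const_mul C).mono ((hzmeas.mul hJmeas).aestronglyMeasurable)
      (Filter.Eventually.of_forall fun ω => ?_)
    have hC : 0 ≤ C := (abs_nonneg _).trans (hJbdd ω)
    simp only [Real.norm_eq_abs]
    rw [abs_mul, abs_of_nonneg (hznonneg ω),
      abs_of_nonneg (mul_nonneg hC (hznonneg ω)), mul_comm C (z ω)]
    exact mul_le_mul_of_nonneg_left (hJbdd ω) (hznonneg ω)
  -- pointwise a.e. bound
  have hptwise : ∀ᵐ ω ∂p,
      (η + ν * ε) * z ω - (ν * max (z ω - l) 0 + l * max (η + ν * ε - J ω) 0)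
        ≤ z ω * J ω := by
    filter_upwards [hfeas] with ω hω
    have key := hs_pointwise l ν (z ω) (η + ν * ε - J ω) hl hν (hznonneg ω) (by linarith)
    nlinarith [key]
  have hlhs : Integrable (fun ω =>
      (η + ν * ε) * z ω - (ν * max (z ω - l) 0 + l * max (η + ν * ε - J ω) 0)) p :=
    (hzint.const_mul _).sub ((hmaxz.const_mul ν).add hmaxJ)
  have hsum : Integrable
      (fun ω => ν * max (z ω - l) 0 + l * max (η + ν * ε - J ω) 0) p :=
    (hmaxz.const_mul ν).add hmaxJ
  have hineq := integral_mono_ae hlhs hzJ hptwise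
  rw [integral_sub (hzint.const_mul _) hsum,
    integral_add (hmaxz.const_mul ν) hmaxJ, integral_const_mul, integral_const_mul,
    hzone] at hineq
  -- bound on ∫ max (z - l) 0
  have hdiv : (∫ ω, max (z ω - l) 0 ∂p) ≤ ε + max (1 - l) 0 := by
    rw [integral_sub hmaxz (integrable_const _), integral_const] at hzdiv
    simp at hzdiv
    linarith
  nlinarith [mul_le_mul_of_nonneg_left hdiv hν.le]
end

section
/- Let σ > 0, δ ≠ 0 a real number, and λ ≥ 1. Let p = N(m, σ²) and q = N(m + δ, σ²) be Gaussian measures on ℝ. Then the hockey-stick divergence D_{HS,λ}(q‖p) = ∫_ℝ max(dq/dp − λ, 0) dp equals Φ(|δ|/(2σ) − σ·ln λ/|δ|) − λ·Φ(−|δ|/(2σ) − σ·ln λ/|δ|), where Φ is the standard normal cumulative distribution function. In particular, the hockey-stick divergence between two Gaussians with common variance depends only on the distance |δ| between their means. -/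
open MeasureTheory ProbabilityTheory


lemma gaussianReal_Iic (σ : ℝ) (hσ : 0 < σ) (m t : ℝ) :
    gaussianReal m ⟨σ ^ 2, sq_nonneg σ⟩ (Set.Iic t)
      = ENNReal.ofReal (cdf (gaussianReal 0 1) ((t - m) / σ)) := by
  have hmap : ((gaussianReal 0 1).map (σ * ·)).map (· + m)
      = gaussianReal m ⟨σ ^ 2, sq_nonneg σ⟩ := by
    rw [gaussianReal_map_const_mul, gaussianReal_map_add_const]
    norm_num
    rfl
  rw [← hmap, Measure.map_apply (measurable_id'.add_const m) measurableSet_Iic,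
    Set.preimage_add_const_Iic,
    Measure.map_apply (measurable_id'.const_mul σ) measurableSet_Iic]
  have : (σ * ·) ⁻¹' Set.Iic (t - m) = Set.Iic ((t - m) / σ) := by
    ext x
    simp only [Set.mem_preimage, Set.mem_Iic]
    rw [le_div_iff₀ hσ, mul_comm]
  rw [this, ofReal_cdf]

lemma gaussianReal_Ici (σ : ℝ) (hσ : 0 < σ) (m t : ℝ) :
    gaussianReal m ⟨σ ^ 2, sq_nonneg σ⟩ (Set.Ici t)
      = ENNReal.ofReal (cdf (gaussianReal 0 1) ((m - t) / σ)) := by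
  have hmap : (gaussianReal m ⟨σ ^ 2, sq_nonneg σ⟩).map ((-1 : ℝ) * ·)
      = gaussianReal (-m) ⟨σ ^ 2, sq_nonneg σ⟩ := by
    erw [gaussianReal_map_const_mul]
    norm_num
    exact congrArg _ (one_mul _)
  have hpre : ((-1 : ℝ) * ·) ⁻¹' Set.Iic (-t) = Set.Ici t := by
    ext x
    simp only [Set.mem_preimage, Set.mem_Iic, Set.mem_Ici, neg_one_mul, neg_le_neg_iff]
  calc gaussianReal m ⟨σ ^ 2, sq_nonneg σ⟩ (Set.Ici t)
      = ((gaussianReal m ⟨σ ^ 2, sq_nonneg σ⟩).map ((-1 : ℝ) * ·)) (Set.Iic (-t)) := by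
        rw [Measure.map_apply (measurable_id'.const_mul _) measurableSet_Iic, hpre]
    _ = gaussianReal (-m) ⟨σ ^ 2, sq_nonneg σ⟩ (Set.Iic (-t)) := by rw [hmap]
    _ = ENNReal.ofReal (cdf (gaussianReal 0 1) ((m - t) / σ)) := by
        rw [gaussianReal_Iic σ hσ]; ring_nf

lemma hs_var_ne (σ : ℝ) (hσ : 0 < σ) : (⟨σ ^ 2, sq_nonneg σ⟩ : NNReal) ≠ 0 := by
  have : (0 : ℝ) < ((⟨σ ^ 2, sq_nonneg σ⟩ : NNReal) : ℝ) := by positivity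
  intro h
  rw [h] at this
  simp at this

lemma hs_pdf_mul (σ : ℝ) (hσ : 0 < σ) (δ m x : ℝ) :
    gaussianPDFReal m ⟨σ ^ 2, sq_nonneg σ⟩ x
      * Real.exp ((2 * δ * (x - m) - δ ^ 2) / (2 * σ ^ 2))
      = gaussianPDFReal (m + δ) ⟨σ ^ 2, sq_nonneg σ⟩ x := by
  simp only [gaussianPDFReal, NNReal.coe_mk]
  rw [mul_assoc, ← Real.exp_add]
  congr 1
  change Real.exp (-(x - m) ^ 2 / (2 * σ ^ 2) + _) = Real.exp (-(x - (m + δ)) ^ 2 / (2 * σ ^ 2))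
  congr 1
  field_simp
  ring

lemma hs_withDensity (σ : ℝ) (hσ : 0 < σ) (δ m : ℝ) :
    gaussianReal (m + δ) ⟨σ ^ 2, sq_nonneg σ⟩
      = (gaussianReal m ⟨σ ^ 2, sq_nonneg σ⟩).withDensity
          (fun x => ENNReal.ofReal (Real.exp ((2 * δ * (x - m) - δ ^ 2) / (2 * σ ^ 2)))) := by
  rw [gaussianReal_of_var_ne_zero _ (hs_var_ne σ hσ), gaussianReal_of_var_ne_zero _ (hs_var_ne σ hσ)]
  have hmeas : Measurable (fun x : ℝ => ENNReal.ofReal (Real.exp ((2 * δ * (x - m) - δ ^ 2) / (2 * σ ^ 2)))) := by fun_prop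
  have hwd := withDensity_mul (volume : Measure ℝ) (measurable_gaussianPDF m ⟨σ ^ 2, sq_nonneg σ⟩) hmeas
  refine Eq.trans ?_ hwd
  congr 1
  ext x
  simp only [Pi.mul_apply, gaussianPDF]
  exact (congrArg ENNReal.ofReal (hs_pdf_mul σ hσ δ m x)).symm.trans
    (ENNReal.ofReal_mul (gaussianPDFReal_nonneg _ _ _))

/-- **Hockey-stick divergence between two Gaussians with common variance.**
For `p = N(m, σ²)`, `q = N(m + δ, σ²)` and `λ ≥ 1`,
`D_{HS,λ}(q‖p) = Φ(|δ|/(2σ) − σ·ln λ/|δ|) − λ·Φ(−|δ|/(2σ) − σ·ln λ/|δ|)`,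
where `Φ` is the standard normal CDF; in particular it depends only on `|δ|`. -/
theorem hockeyStick_divergence_gaussian
    (σ : ℝ) (hσ : 0 < σ) (δ : ℝ) (hδ : δ ≠ 0) (l : ℝ) (hl : 1 ≤ l) (m : ℝ) :
    (∫ x, max (((gaussianReal (m + δ) ⟨σ ^ 2, sq_nonneg σ⟩).rnDeriv
          (gaussianReal m ⟨σ ^ 2, sq_nonneg σ⟩) x).toReal - l) 0
        ∂(gaussianReal m ⟨σ ^ 2, sq_nonneg σ⟩)) =
      cdf (gaussianReal 0 1) (|δ| / (2 * σ) - σ * Real.log l / |δ|) -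
        l * cdf (gaussianReal 0 1) (-(|δ| / (2 * σ)) - σ * Real.log l / |δ|) := by
  have hl0 : (0 : ℝ) < l := lt_of_lt_of_le one_pos hl
  set v : NNReal := ⟨σ ^ 2, sq_nonneg σ⟩ with hv_def
  have hv : v ≠ 0 := hs_var_ne σ hσ
  set p := gaussianReal m v with hp_def
  set q := gaussianReal (m + δ) v with hq_def
  set r : ℝ → ℝ := fun x => (2 * δ * (x - m) - δ ^ 2) / (2 * σ ^ 2) with hr_def
  have hrmeas : Measurable fun x => ENNReal.ofReal (Real.exp (r x)) := by fun_prop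
  have hrn : q.rnDeriv p =ᵐ[p] fun x => ENNReal.ofReal (Real.exp (r x)) := by
    rw [hq_def, hp_def, hs_withDensity σ hσ δ m]
    exact Measure.rnDeriv_withDensity p hrmeas
  set A : Set ℝ := {x | Real.log l ≤ r x} with hA_def
  have hA : MeasurableSet A := measurableSet_le measurable_const (by fun_prop)
  have hqp : q ≪ p :=
    (gaussianReal_absolutelyContinuous _ hv).trans (gaussianReal_absolutelyContinuous' _ hv)
  have hstep : (∫ x, max ((q.rnDeriv p x).toReal - l) 0 ∂p)
      = ∫ x, A.indicator (fun x => (q.rnDeriv p x).toReal - l) x ∂p := by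
    refine integral_congr_ae ?_
    filter_upwards [hrn] with x hx
    by_cases hxA : x ∈ A
    · rw [Set.indicator_of_mem hxA]
      refine max_eq_left ?_
      rw [hx, ENNReal.toReal_ofReal (Real.exp_pos _).le, sub_nonneg]
      calc l = Real.exp (Real.log l) := (Real.exp_log hl0).symm
        _ ≤ Real.exp (r x) := Real.exp_le_exp.mpr hxA
    · rw [Set.indicator_of_notMem hxA]
      refine max_eq_right ?_
      rw [hx, ENNReal.toReal_ofReal (Real.exp_pos _).le, sub_nonpos]
      have : r x < Real.log l := lt_of_not_ge hxA
      calc Real.exp (r x) ≤ Real.exp (Real.log l) := Real.exp_le_exp.mpr this.le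
        _ = l := Real.exp_log hl0
  rw [hstep, integral_indicator hA,
    integral_sub (Measure.integrable_toReal_rnDeriv.restrict) (integrable_const l),
    Measure.setIntegral_toReal_rnDeriv hqp A, setIntegral_const, smul_eq_mul]
  set t : ℝ := m + δ / 2 + σ ^ 2 * Real.log l / δ with ht_def
  rcases hδ.lt_or_gt with hneg | hpos
  · -- δ < 0 : A = Iic t
    have hδt : δ * t = δ * m + δ ^ 2 / 2 + σ ^ 2 * Real.log l := by
      rw [ht_def]; field_simp
    have hAeq : A = Set.Iic t := by
      ext x
      simp only [hA_def, Set.mem_setOf_eq, Set.mem_Iic, hr_def]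
      rw [le_div_iff₀ (by positivity : (0 : ℝ) < 2 * σ ^ 2)]
      constructor
      · intro h
        rw [← mul_le_mul_left_of_neg hneg, hδt]
        nlinarith
      · intro h
        rw [← mul_le_mul_left_of_neg hneg, hδt] at h
        nlinarith
    have habs : |δ| = -δ := abs_of_neg hneg
    have hq_arg : (t - (m + δ)) / σ = |δ| / (2 * σ) - σ * Real.log l / |δ| := by
      rw [habs, ht_def]; field_simp [hδ]; ring
    have hp_arg : (t - m) / σ = -(|δ| / (2 * σ)) - σ * Real.log l / |δ| := by
      rw [habs, ht_def]; field_simp [hδ]; ring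
    rw [hAeq, hq_def, hp_def, measureReal_def, measureReal_def, gaussianReal_Iic σ hσ, gaussianReal_Iic σ hσ, hq_arg, hp_arg,
      ENNReal.toReal_ofReal (cdf_nonneg _ _), ENNReal.toReal_ofReal (cdf_nonneg _ _)]
    ring
  · -- δ > 0 : A = Ici t
    have hδt : δ * t = δ * m + δ ^ 2 / 2 + σ ^ 2 * Real.log l := by
      rw [ht_def]; field_simp
    have hAeq : A = Set.Ici t := by
      ext x
      simp only [hA_def, Set.mem_setOf_eq, Set.mem_Ici, hr_def]
      rw [le_div_iff₀ (by positivity : (0 : ℝ) < 2 * σ ^ 2)]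
      constructor
      · intro h
        rw [← mul_le_mul_iff_right₀ hpos, hδt]
        nlinarith
      · intro h
        rw [← mul_le_mul_iff_right₀ hpos, hδt] at h
        nlinarith
    have habs : |δ| = δ := abs_of_pos hpos
    have hq_arg : (m + δ - t) / σ = |δ| / (2 * σ) - σ * Real.log l / |δ| := by
      rw [habs, ht_def]; field_simp [hδ]; ring
    have hp_arg : (m - t) / σ = -(|δ| / (2 * σ)) - σ * Real.log l / |δ| := by
      rw [habs, ht_def]; field_simp [hδ]; ring
    rw [hAeq, hq_def, hp_def, measureReal_def, measureReal_def, gaussianReal_Ici σ hσ, gaussianReal_Ici σ hσ, hq_arg, hp_arg,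
      ENNReal.toReal_ofReal (cdf_nonneg _ _), ENNReal.toReal_ofReal (cdf_nonneg _ _)]
    ring
end

section
/- Let σ > 0, D ≥ 1, μ ∈ ℝ^D and δ ∈ ℝ^D. Let p = ⊗_{i=1}^D N(μ_i, σ²) and q = ⊗_{i=1}^D N(μ_i + δ_i, σ²) be the corresponding product Gaussian measures on ℝ^D. Then the total variation distance between q and p equals 2·Φ(‖δ‖₂/(2σ)) − 1, where ‖δ‖₂ is the Euclidean norm of δ and Φ is the standard normal CDF. Consequently, if the perturbation satisfies the l₁ budget ‖δ‖₁ ≤ ε, then TV(q, p) ≤ 2·Φ(ε/(2σ)) − 1. -/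
open scoped ENNReal NNReal Real
open MeasureTheory ProbabilityTheory

lemma my_lintegral_pi_prod : ∀ (n : ℕ) (h : Fin n → ℝ → ℝ≥0∞), (∀ i, Measurable (h i)) →
    ∫⁻ x : Fin n → ℝ, ∏ i, h i (x i) ∂(Measure.pi fun _ => (volume : Measure ℝ))
      = ∏ i, ∫⁻ x, h i x := by
  intro n
  induction n with
  | zero =>
    intro h _
    simp [lintegral_const, Measure.pi_univ]
  | succ n ih =>
    intro h hm
    have hmp := measurePreserving_piFinSuccAbove (fun _ : Fin (n+1) => (volume : Measure ℝ)) 0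
    have hF : Measurable (fun p : ℝ × (Fin n → ℝ) => h 0 p.1 * ∏ j, h j.succ (p.2 j)) := by
      apply ((hm 0).comp measurable_fst).mul
      exact Finset.measurable_prod _ fun j _ => (hm j.succ).comp ((measurable_pi_apply j).comp measurable_snd)
    calc ∫⁻ x : Fin (n+1) → ℝ, ∏ i, h i (x i) ∂(Measure.pi fun _ => (volume : Measure ℝ))
        = ∫⁻ x : Fin (n+1) → ℝ, (fun p : ℝ × (Fin n → ℝ) => h 0 p.1 * ∏ j, h j.succ (p.2 j))
            ((MeasurableEquiv.piFinSuccAbove (fun _ => ℝ) 0) x)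
            ∂(Measure.pi fun _ => (volume : Measure ℝ)) := by
          congr 1 with x
          simp [MeasurableEquiv.piFinSuccAbove, Fin.prod_univ_succ, Fin.zero_succAbove, Fin.tail]
      _ = ∫⁻ p, h 0 p.1 * ∏ j, h j.succ (p.2 j)
            ∂((volume : Measure ℝ).prod (Measure.pi fun _ : Fin n => (volume : Measure ℝ))) :=
          hmp.lintegral_comp hF
      _ = (∫⁻ x, h 0 x) * ∏ j : Fin n, ∫⁻ x, h j.succ x := by
          rw [lintegral_prod_mul (f := h 0) (g := fun y : Fin n → ℝ => ∏ j, h j.succ (y j)) ((hm 0).aemeasurable)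
            ((Finset.measurable_prod _ fun j _ => (hm j.succ).comp (measurable_pi_apply j)).aemeasurable)]
          rw [ih _ fun j => hm j.succ]
      _ = ∏ i, ∫⁻ x, h i x := (Fin.prod_univ_succ fun i : Fin (n+1) => ∫⁻ x, h i x).symm

lemma my_prod_pdf_repr {n : ℕ} (m x : Fin n → ℝ) (v : ℝ≥0) :
    ∏ i, gaussianPDFReal (m i) v (x i)
      = ((Real.sqrt (2 * π * v))⁻¹)^n * Real.exp (∑ i, -(x i - m i)^2/(2*(v:ℝ))) := by
  rw [Real.exp_sum]
  simp_rw [gaussianPDFReal]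
  rw [Finset.prod_mul_distrib, Finset.prod_const]
  simp [Finset.card_univ]

lemma my_prod_pdf_mono {n : ℕ} (m m' x : Fin n → ℝ) {v : ℝ≥0}
    (hsum : ∑ i, -(x i - m i)^2/(2*(v:ℝ)) ≤ ∑ i, -(x i - m' i)^2/(2*(v:ℝ))) :
    ∏ i, gaussianPDFReal (m i) v (x i) ≤ ∏ i, gaussianPDFReal (m' i) v (x i) := by
  rw [my_prod_pdf_repr, my_prod_pdf_repr]
  exact mul_le_mul_of_nonneg_left (Real.exp_le_exp.mpr hsum)
    (pow_nonneg (inv_nonneg.mpr (Real.sqrt_nonneg _)) n)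

lemma my_sum_exponent_diff {n : ℕ} (μ δ x : Fin n → ℝ) {v : ℝ≥0} (hv : 0 < (v:ℝ)) :
    ∑ i, -(x i - (μ i + δ i))^2/(2*(v:ℝ)) - ∑ i, -(x i - μ i)^2/(2*(v:ℝ))
      = (∑ i, δ i * x i - (∑ i, δ i * μ i + (∑ i, δ i^2)/2))/(v:ℝ) := by
  rw [← Finset.sum_sub_distrib]
  have : ∀ i ∈ Finset.univ, -(x i - (μ i + δ i))^2/(2*(v:ℝ)) - -(x i - μ i)^2/(2*(v:ℝ))
      = (δ i * x i - δ i * μ i - δ i^2/2)/(v:ℝ) := by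
    intro i _
    field_simp
    ring
  rw [Finset.sum_congr rfl this, ← Finset.sum_div, Finset.sum_sub_distrib,
    Finset.sum_sub_distrib, Finset.sum_div]
  ring

lemma my_prod_pdf_le {n : ℕ} (μ δ x : Fin n → ℝ) {v : ℝ≥0} (hv : 0 < (v:ℝ))
    (h : ∑ i, δ i * μ i + (∑ i, δ i^2)/2 ≤ ∑ i, δ i * x i) :
    ∏ i, gaussianPDFReal (μ i) v (x i) ≤ ∏ i, gaussianPDFReal (μ i + δ i) v (x i) := by
  refine my_prod_pdf_mono _ _ _ ?_
  have := my_sum_exponent_diff μ δ x hv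
  nlinarith [div_nonneg (sub_nonneg.mpr h) hv.le]

lemma my_prod_pdf_ge {n : ℕ} (μ δ x : Fin n → ℝ) {v : ℝ≥0} (hv : 0 < (v:ℝ))
    (h : ∑ i, δ i * x i ≤ ∑ i, δ i * μ i + (∑ i, δ i^2)/2) :
    ∏ i, gaussianPDFReal (μ i + δ i) v (x i) ≤ ∏ i, gaussianPDFReal (μ i) v (x i) := by
  refine my_prod_pdf_mono _ _ _ ?_
  have := my_sum_exponent_diff μ δ x hv
  nlinarith [div_nonpos_of_nonpos_of_nonneg (sub_nonpos.mpr h) hv.le]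

lemma my_pi_gaussian_withDensity {n : ℕ} (m : Fin n → ℝ) {v : ℝ≥0} (hv : v ≠ 0) :
    Measure.pi (fun i => gaussianReal (m i) v)
      = (Measure.pi fun _ : Fin n => (volume : Measure ℝ)).withDensity
          (fun x => ∏ i, gaussianPDF (m i) v (x i)) := by
  refine Measure.pi_eq fun s hs => ?_
  rw [withDensity_apply _ (MeasurableSet.univ_pi hs), ← lintegral_indicator (MeasurableSet.univ_pi hs)]
  have hind : ∀ x : Fin n → ℝ,
      (Set.pi Set.univ s).indicator (fun x => ∏ i, gaussianPDF (m i) v (x i)) x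
        = ∏ i, (s i).indicator (gaussianPDF (m i) v) (x i) := by
    intro x
    by_cases hx : x ∈ Set.pi Set.univ s
    · rw [Set.indicator_of_mem hx]
      exact Finset.prod_congr rfl fun i _ => (Set.indicator_of_mem (hx i (Set.mem_univ i)) _).symm
    · rw [Set.indicator_of_notMem hx]
      rw [Set.mem_univ_pi] at hx
      push_neg at hx
      obtain ⟨i, hi⟩ := hx
      exact (Finset.prod_eq_zero (Finset.mem_univ i) (Set.indicator_of_notMem hi _)).symm
  simp_rw [hind]
  rw [my_lintegral_pi_prod n _ (fun i => (measurable_gaussianPDF (m i) v).indicator (hs i))]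
  refine Finset.prod_congr rfl fun i _ => ?_
  rw [lintegral_indicator (hs i), gaussianReal_apply _ hv]

lemma my_pdf_factor (m₁ m₂ : ℝ) {v₁ v₂ : ℝ≥0} (h₁ : v₁ ≠ 0) (h₂ : v₂ ≠ 0) (z x : ℝ) :
    gaussianPDFReal m₁ v₁ x * gaussianPDFReal m₂ v₂ (z - x)
      = gaussianPDFReal (m₁ + m₂) (v₁ + v₂) z *
        gaussianPDFReal (m₁ + (v₁ / (v₁ + v₂) : ℝ≥0) * (z - m₁ - m₂)) (v₁ * v₂ / (v₁ + v₂)) x := by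
  have ha : (0:ℝ) < v₁ := lt_of_le_of_ne (v₁.coe_nonneg) (by exact_mod_cast (Ne.symm h₁))
  have hb : (0:ℝ) < v₂ := lt_of_le_of_ne (v₂.coe_nonneg) (by exact_mod_cast (Ne.symm h₂))
  have hab : (0:ℝ) < (v₁:ℝ) + v₂ := by linarith
  simp only [gaussianPDFReal]
  have hcast1 : ((v₁ + v₂ : ℝ≥0) : ℝ) = (v₁:ℝ) + v₂ := by push_cast; ring
  have hcast2 : ((v₁ * v₂ / (v₁ + v₂) : ℝ≥0) : ℝ) = (v₁:ℝ) * v₂ / ((v₁:ℝ) + v₂) := by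
    push_cast; ring
  have hcast3 : ((v₁ / (v₁ + v₂) : ℝ≥0) : ℝ) = (v₁:ℝ) / ((v₁:ℝ) + v₂) := by push_cast; ring
  rw [hcast1, hcast2, hcast3]
  set a := (v₁:ℝ)
  set b := (v₂:ℝ)
  have hnorm : (Real.sqrt (2 * π * a))⁻¹ * (Real.sqrt (2 * π * b))⁻¹
      = (Real.sqrt (2 * π * (a + b)))⁻¹ * (Real.sqrt (2 * π * (a * b / (a + b))))⁻¹ := by
    rw [← mul_inv, ← mul_inv, ← Real.sqrt_mul (by positivity), ← Real.sqrt_mul (by positivity)]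
    congr 1
    field_simp
  have hexp : -(x - m₁)^2 / (2*a) + -(z - x - m₂)^2 / (2*b)
      = -(z - (m₁ + m₂))^2 / (2*(a+b)) + -(x - (m₁ + a/(a+b)*(z - m₁ - m₂)))^2 / (2*(a*b/(a+b))) := by
    field_simp
    ring
  calc (Real.sqrt (2 * π * a))⁻¹ * Real.exp (-(x - m₁)^2 / (2*a)) *
        ((Real.sqrt (2 * π * b))⁻¹ * Real.exp (-(z - x - m₂)^2 / (2*b)))
      = (Real.sqrt (2 * π * a))⁻¹ * (Real.sqrt (2 * π * b))⁻¹ *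
        Real.exp (-(x - m₁)^2 / (2*a) + -(z - x - m₂)^2 / (2*b)) := by
        rw [Real.exp_add]; ring
    _ = (Real.sqrt (2 * π * (a+b)))⁻¹ * (Real.sqrt (2 * π * (a*b/(a+b))))⁻¹ *
        Real.exp (-(z - (m₁ + m₂))^2 / (2*(a+b)) +
          -(x - (m₁ + a/(a+b)*(z - m₁ - m₂)))^2 / (2*(a*b/(a+b)))) := by
        rw [hnorm, hexp]
    _ = _ := by rw [Real.exp_add]; ring

lemma my_lintegral_conv_pdf (m₁ m₂ : ℝ) {v₁ v₂ : ℝ≥0} (h₁ : v₁ ≠ 0) (h₂ : v₂ ≠ 0) (z : ℝ) :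
    ∫⁻ x, gaussianPDF m₁ v₁ x * gaussianPDF m₂ v₂ (z - x)
      = gaussianPDF (m₁ + m₂) (v₁ + v₂) z := by
  have hvs : v₁ * v₂ / (v₁ + v₂) ≠ 0 := by
    have h : v₁ + v₂ ≠ 0 := by simp [h₁]
    simp [div_eq_zero_iff, h₁, h₂, h]
  simp only [gaussianPDF]
  have hpt : ∀ x, ENNReal.ofReal (gaussianPDFReal m₁ v₁ x) *
      ENNReal.ofReal (gaussianPDFReal m₂ v₂ (z - x))
      = ENNReal.ofReal (gaussianPDFReal (m₁ + m₂) (v₁ + v₂) z) *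
        ENNReal.ofReal (gaussianPDFReal
          (m₁ + (v₁ / (v₁ + v₂) : ℝ≥0) * (z - m₁ - m₂)) (v₁ * v₂ / (v₁ + v₂)) x) := by
    intro x
    rw [← ENNReal.ofReal_mul (gaussianPDFReal_nonneg _ _ _),
      ← ENNReal.ofReal_mul (gaussianPDFReal_nonneg _ _ _), my_pdf_factor m₁ m₂ h₁ h₂ z x]
  simp_rw [hpt]
  rw [lintegral_const_mul _ ((measurable_gaussianPDFReal _ _).ennreal_ofReal)]
  have := lintegral_gaussianPDFReal_eq_one
    (m₁ + (v₁ / (v₁ + v₂) : ℝ≥0) * (z - m₁ - m₂)) hvs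
  rw [this, mul_one]

lemma my_gaussian_conv (m₁ m₂ : ℝ) (v₁ v₂ : ℝ≥0) :
    Measure.map (fun p : ℝ × ℝ => p.1 + p.2) ((gaussianReal m₁ v₁).prod (gaussianReal m₂ v₂))
      = gaussianReal (m₁ + m₂) (v₁ + v₂) := by
  by_cases h₁ : v₁ = 0
  · subst h₁
    rw [gaussianReal_zero_var, Measure.dirac_prod, zero_add,
      Measure.map_map (by fun_prop) measurable_prodMk_left]
    have h : ((fun p : ℝ × ℝ => p.1 + p.2) ∘ Prod.mk m₁) = fun y => m₁ + y := rfl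
    rw [h, gaussianReal_map_const_add, add_comm m₂ m₁]
  by_cases h₂ : v₂ = 0
  · subst h₂
    rw [gaussianReal_zero_var, Measure.prod_dirac, add_zero,
      Measure.map_map (by fun_prop) measurable_prodMk_right]
    have h : ((fun p : ℝ × ℝ => p.1 + p.2) ∘ (fun x => (x, m₂))) = fun y => y + m₂ := rfl
    rw [h, gaussianReal_map_add_const]
  -- main case
  have hsum : v₁ + v₂ ≠ 0 := by simp [h₁]
  have hg₂ : Measurable (gaussianPDF m₂ v₂) := measurable_gaussianPDF _ _
  have hg₁ : Measurable (gaussianPDF m₁ v₁) := measurable_gaussianPDF _ _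
  ext s hs
  rw [Measure.map_apply (by fun_prop) hs, Measure.prod_apply (measurable_add hs)]
  have hFmeas : Measurable (fun p : ℝ × ℝ =>
      s.indicator (fun z => gaussianPDF m₂ v₂ (z - p.1)) p.2) := by
    have : (fun p : ℝ × ℝ => s.indicator (fun z => gaussianPDF m₂ v₂ (z - p.1)) p.2)
        = {p : ℝ × ℝ | p.2 ∈ s}.indicator (fun p => gaussianPDF m₂ v₂ (p.2 - p.1)) := by
      ext p
      by_cases hp : p.2 ∈ s
      · rw [Set.indicator_of_mem hp, Set.indicator_of_mem (by exact hp)]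
      · rw [Set.indicator_of_notMem hp, Set.indicator_of_notMem (by exact hp)]
    rw [this]
    exact Measurable.indicator (by fun_prop) (measurable_snd hs)
  have hinner : ∀ x : ℝ, (gaussianReal m₂ v₂) (Prod.mk x ⁻¹' ((fun p : ℝ × ℝ => p.1 + p.2) ⁻¹' s))
      = ∫⁻ z, s.indicator (fun z => gaussianPDF m₂ v₂ (z - x)) z := by
    intro x
    have hpre : (Prod.mk x ⁻¹' ((fun p : ℝ × ℝ => p.1 + p.2) ⁻¹' s)) = (fun y => x + y) ⁻¹' s := rfl
    rw [hpre, gaussianReal_of_var_ne_zero _ h₂,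
      withDensity_apply _ (hs.preimage (by fun_prop)),
      ← lintegral_indicator (hs.preimage (by fun_prop))]
    have hpt : ∀ y : ℝ, ((fun y => x + y) ⁻¹' s).indicator (gaussianPDF m₂ v₂) y
        = s.indicator (fun z => gaussianPDF m₂ v₂ (z - x)) (y + x) := by
      intro y
      have hy' : y + x ∈ s ↔ x + y ∈ s := by rw [add_comm]
      by_cases hy : x + y ∈ s
      · rw [Set.indicator_of_mem (show y ∈ (fun y => x + y) ⁻¹' s from hy),
          Set.indicator_of_mem (hy'.mpr hy)]
        simp
      · rw [Set.indicator_of_notMem (show y ∉ (fun y => x + y) ⁻¹' s from hy),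
          Set.indicator_of_notMem (fun h => hy (hy'.mp h))]
    simp_rw [hpt]
    exact lintegral_add_right_eq_self (μ := (volume : Measure ℝ))
      (fun z => s.indicator (fun z => gaussianPDF m₂ v₂ (z - x)) z) x
  simp_rw [hinner]
  rw [gaussianReal_of_var_ne_zero _ h₁,
    lintegral_withDensity_eq_lintegral_mul _ hg₁
      (Measurable.lintegral_prod_right' hFmeas)]
  have hswap : ∫⁻ x, (gaussianPDF m₁ v₁ *
        fun x => ∫⁻ z, s.indicator (fun z => gaussianPDF m₂ v₂ (z - x)) z) x
      = ∫⁻ z, ∫⁻ x, gaussianPDF m₁ v₁ x *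
          s.indicator (fun z => gaussianPDF m₂ v₂ (z - x)) z ∂volume ∂volume := by
    simp only [Pi.mul_apply]
    rw [← lintegral_lintegral_swap]
    · congr 1 with x
      rw [lintegral_const_mul _ (by
        exact Measurable.indicator (by fun_prop) hs)]
    · exact ((hg₁.comp measurable_fst).mul hFmeas).aemeasurable
  rw [hswap]
  have hz : ∀ z : ℝ, ∫⁻ x, gaussianPDF m₁ v₁ x *
        s.indicator (fun z => gaussianPDF m₂ v₂ (z - x)) z ∂volume
      = s.indicator (gaussianPDF (m₁ + m₂) (v₁ + v₂)) z := by
    intro z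
    by_cases hzs : z ∈ s
    · rw [Set.indicator_of_mem hzs]
      simp_rw [Set.indicator_of_mem hzs]
      exact my_lintegral_conv_pdf m₁ m₂ h₁ h₂ z
    · rw [Set.indicator_of_notMem hzs]
      simp_rw [Set.indicator_of_notMem hzs, mul_zero, lintegral_zero]
  simp_rw [hz]
  rw [lintegral_indicator hs, gaussianReal_apply _ hsum]

lemma my_map_weighted_sum : ∀ (n : ℕ) (c m : Fin n → ℝ) (v : ℝ≥0),
    Measure.map (fun x : Fin n → ℝ => ∑ i, c i * x i)
        (Measure.pi fun i => gaussianReal (m i) v)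
      = gaussianReal (∑ i, c i * m i) (∑ i, (show ℝ≥0 from ⟨(c i)^2, sq_nonneg _⟩) * v) := by
  intro n
  induction n with
  | zero =>
    intro c m v
    simp only [Finset.univ_eq_empty, Finset.sum_empty]
    have : IsProbabilityMeasure (Measure.pi fun i : Fin 0 => gaussianReal (m i) v) := inferInstance
    rw [show (fun x : Fin 0 → ℝ => (0:ℝ)) = (fun _ => 0) from rfl, Measure.map_const,
      measure_univ, one_smul, gaussianReal_zero_var]
  | succ n ih =>
    intro c m v
    have hmp := measurePreserving_piFinSuccAbove (fun i : Fin (n+1) => gaussianReal (m i) v) 0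
    set e := MeasurableEquiv.piFinSuccAbove (fun _ : Fin (n+1) => ℝ) 0 with he
    have hg : Measurable (fun p : ℝ × (Fin n → ℝ) => c 0 * p.1 + ∑ j, c j.succ * p.2 j) := by
      fun_prop
    have hT : (fun x : Fin (n+1) → ℝ => ∑ i, c i * x i)
        = (fun p : ℝ × (Fin n → ℝ) => c 0 * p.1 + ∑ j, c j.succ * p.2 j) ∘ e := by
      ext x
      simp [e, MeasurableEquiv.piFinSuccAbove, Fin.sum_univ_succ, Fin.zero_succAbove, Fin.tail]
    rw [hT, ← Measure.map_map hg e.measurable, hmp.map_eq]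
    have hsplit : (fun p : ℝ × (Fin n → ℝ) => c 0 * p.1 + ∑ j, c j.succ * p.2 j)
        = (fun q : ℝ × ℝ => q.1 + q.2) ∘
          (Prod.map (fun a => c 0 * a) (fun y : Fin n → ℝ => ∑ j, c j.succ * y j)) := rfl
    rw [hsplit, ← Measure.map_map (by fun_prop) (by fun_prop),
      ← Measure.map_prod_map _ _ (by fun_prop) (by fun_prop)]
    have h0 : Measure.map (fun a => c 0 * a) (gaussianReal (m 0) v)
        = gaussianReal (c 0 * m 0) ((show ℝ≥0 from ⟨(c 0)^2, sq_nonneg _⟩) * v) :=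
      gaussianReal_map_const_mul (c 0)
    have hfin : (fun j : Fin n => (0 : Fin (n+1)).succAbove j) = Fin.succ := by
      ext j
      simp [Fin.zero_succAbove]
    rw [h0]
    have hrest := ih (fun j => c j.succ) (fun j => m j.succ) v
    have : (Measure.pi fun j : Fin n => gaussianReal (m ((0 : Fin (n+1)).succAbove j)) v)
        = Measure.pi fun j : Fin n => gaussianReal (m j.succ) v := by
      congr 1
    rw [this, hrest, my_gaussian_conv, Fin.sum_univ_succ, Fin.sum_univ_succ]

lemma my_gaussian_singleton (M : ℝ) {w : ℝ≥0} (hw : w ≠ 0) (x : ℝ) :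
    gaussianReal M w {x} = 0 :=
  gaussianReal_absolutelyContinuous M hw (Real.volume_singleton)

lemma my_std_Ioi (t : ℝ) :
    ((gaussianReal 0 1 : Measure ℝ) (Set.Ioi t)).toReal = 1 - cdf (gaussianReal 0 1) t := by
  have h : (Set.Ioi t) = (Set.Iic t)ᶜ := by simp
  rw [h, measure_compl measurableSet_Iic (measure_ne_top _ _), measure_univ,
    ENNReal.toReal_sub_of_le prob_le_one ENNReal.one_ne_top, ENNReal.toReal_one,
    cdf_eq_real, measureReal_def]

lemma my_std_symm (t : ℝ) :
    cdf (gaussianReal 0 1) (-t) = 1 - cdf (gaussianReal 0 1) t := by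
  have hmap : Measure.map (fun x : ℝ => (-1 : ℝ) * x) (gaussianReal 0 1) = gaussianReal 0 1 := by
    rw [gaussianReal_map_const_mul]
    congr 1
    · ring
    · ext
      push_cast
      norm_num
  have h1 : cdf (gaussianReal 0 1) (-t) = ((gaussianReal 0 1 : Measure ℝ) (Set.Ici t)).toReal := by
    rw [cdf_eq_real, measureReal_def]
    congr 1
    conv_lhs => rw [← hmap]
    rw [Measure.map_apply (by fun_prop) measurableSet_Iic]
    congr 1
    ext x
    simp only [Set.mem_preimage, Set.mem_Iic, Set.mem_Ici]
    constructor <;> intro h <;> linarith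
  have h2 : (gaussianReal 0 1 : Measure ℝ) (Set.Ici t)
      = (gaussianReal 0 1 : Measure ℝ) (Set.Ioi t) := by
    rw [← Set.Ioi_union_left]
    refine le_antisymm ?_ (measure_mono Set.subset_union_left)
    calc (gaussianReal 0 1 : Measure ℝ) (Set.Ioi t ∪ {t})
        ≤ (gaussianReal 0 1 : Measure ℝ) (Set.Ioi t) + (gaussianReal 0 1 : Measure ℝ) {t} :=
          measure_union_le _ _
      _ = (gaussianReal 0 1 : Measure ℝ) (Set.Ioi t) := by
          rw [my_gaussian_singleton 0 one_ne_zero t, add_zero]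
  rw [h1, h2, my_std_Ioi]

lemma my_gaussian_Ioi (M c : ℝ) {w : ℝ≥0} (hw : w ≠ 0) :
    ((gaussianReal M w : Measure ℝ) (Set.Ioi c)).toReal
      = 1 - cdf (gaussianReal 0 1) ((c - M) / Real.sqrt w) := by
  have hwpos : (0:ℝ) < Real.sqrt w := Real.sqrt_pos.mpr
    (lt_of_le_of_ne w.coe_nonneg (by exact_mod_cast Ne.symm hw))
  have hmap : Measure.map (fun x : ℝ => Real.sqrt w * x + M) (gaussianReal 0 1)
      = gaussianReal M w := by
    have h1 : Measure.map (fun x : ℝ => Real.sqrt w * x) (gaussianReal 0 1)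
        = gaussianReal 0 w := by
      rw [gaussianReal_map_const_mul]
      congr 1
      · ring
      · ext
        push_cast
        rw [Real.sq_sqrt w.coe_nonneg]
        simp
    have : (fun x : ℝ => Real.sqrt w * x + M)
        = (fun x => x + M) ∘ (fun x => Real.sqrt w * x) := rfl
    rw [this, ← Measure.map_map (by fun_prop) (by fun_prop), h1, gaussianReal_map_add_const,
      zero_add]
  rw [← hmap, Measure.map_apply (by fun_prop) measurableSet_Ioi]
  have hpre : (fun x : ℝ => Real.sqrt w * x + M) ⁻¹' (Set.Ioi c)
      = Set.Ioi ((c - M) / Real.sqrt w) := by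
    ext x
    simp only [Set.mem_preimage, Set.mem_Ioi]
    rw [div_lt_iff₀ hwpos]
    constructor <;> intro h <;> nlinarith
  rw [hpre, my_std_Ioi]

/-- **Total variation distance between isotropic Gaussians.** For product Gaussian
measures `p = ⊗ N(μᵢ, σ²)` and `q = ⊗ N(μᵢ + δᵢ, σ²)` on `ℝ^D`,
`TV(q, p) = 2·Φ(‖δ‖₂/(2σ)) − 1`; consequently `‖δ‖₁ ≤ ε` implies
`TV(q, p) ≤ 2·Φ(ε/(2σ)) − 1`. Here `TV(q, p) = sup_A |q(A) − p(A)|`. -/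
theorem totalVariation_gaussian_shift
    (σ : ℝ) (hσ : 0 < σ) (D : ℕ) (hD : 1 ≤ D) (μ δ : Fin D → ℝ) (ε : ℝ) :
    (⨆ A : {s : Set (Fin D → ℝ) // MeasurableSet s},
        |((Measure.pi fun i => gaussianReal (μ i + δ i) ⟨σ ^ 2, sq_nonneg σ⟩) A).toReal -
          ((Measure.pi fun i => gaussianReal (μ i) ⟨σ ^ 2, sq_nonneg σ⟩) A).toReal|) =
      2 * cdf (gaussianReal 0 1) (Real.sqrt (∑ i, δ i ^ 2) / (2 * σ)) - 1 ∧
    ((∑ i, |δ i|) ≤ ε →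
      (⨆ A : {s : Set (Fin D → ℝ) // MeasurableSet s},
        |((Measure.pi fun i => gaussianReal (μ i + δ i) ⟨σ ^ 2, sq_nonneg σ⟩) A).toReal -
          ((Measure.pi fun i => gaussianReal (μ i) ⟨σ ^ 2, sq_nonneg σ⟩) A).toReal|) ≤
        2 * cdf (gaussianReal 0 1) (ε / (2 * σ)) - 1) := by
  haveI : Nonempty {s : Set (Fin D → ℝ) // MeasurableSet s} := ⟨⟨∅, MeasurableSet.empty⟩⟩
  set v : ℝ≥0 := ⟨σ ^ 2, sq_nonneg σ⟩ with hv_def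
  have hvcoe : (v:ℝ) = σ ^ 2 := rfl
  have hvpos : (0:ℝ) < (v:ℝ) := by rw [hvcoe]; positivity
  have hv : v ≠ 0 := fun h => by rw [h] at hvpos; simp at hvpos
  set p := Measure.pi fun i => gaussianReal (μ i) v with hp_def
  set q := Measure.pi fun i => gaussianReal (μ i + δ i) v with hq_def
  haveI : IsProbabilityMeasure p := by rw [hp_def]; infer_instance
  haveI : IsProbabilityMeasure q := by rw [hq_def]; infer_instance
  set T : (Fin D → ℝ) → ℝ := fun x => ∑ i, δ i * x i with hT_def
  have hT : Measurable T := by fun_prop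
  set cthr : ℝ := ∑ i, δ i * μ i + (∑ i, δ i ^ 2)/2 with hcthr_def
  set S : Set (Fin D → ℝ) := T ⁻¹' (Set.Ioi cthr) with hS_def
  have hS : MeasurableSet S := hT measurableSet_Ioi
  -- density comparison
  have k1 : ∀ B : Set (Fin D → ℝ), MeasurableSet B → B ⊆ S → p B ≤ q B := by
    intro B hB hBS
    rw [hp_def, hq_def, my_pi_gaussian_withDensity _ hv, my_pi_gaussian_withDensity _ hv,
      withDensity_apply _ hB, withDensity_apply _ hB]
    refine setLIntegral_mono' hB fun x hx => ?_
    have hx' : cthr ≤ T x := le_of_lt (hBS hx)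
    have h1 : ∀ m : Fin D → ℝ, ∏ i, gaussianPDF (m i) v (x i)
        = ENNReal.ofReal (∏ i, gaussianPDFReal (m i) v (x i)) := by
      intro m
      rw [ENNReal.ofReal_prod_of_nonneg (fun i _ => gaussianPDFReal_nonneg _ _ _)]
      rfl
    rw [h1 μ, h1 (fun i => μ i + δ i)]
    exact ENNReal.ofReal_le_ofReal (my_prod_pdf_le μ δ x hvpos hx')
  have k2 : ∀ B : Set (Fin D → ℝ), MeasurableSet B → B ⊆ Sᶜ → q B ≤ p B := by
    intro B hB hBS
    rw [hp_def, hq_def, my_pi_gaussian_withDensity _ hv, my_pi_gaussian_withDensity _ hv,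
      withDensity_apply _ hB, withDensity_apply _ hB]
    refine setLIntegral_mono' hB fun x hx => ?_
    have hx' : T x ≤ cthr := le_of_not_gt (hBS hx)
    have h1 : ∀ m : Fin D → ℝ, ∏ i, gaussianPDF (m i) v (x i)
        = ENNReal.ofReal (∏ i, gaussianPDFReal (m i) v (x i)) := by
      intro m
      rw [ENNReal.ofReal_prod_of_nonneg (fun i _ => gaussianPDFReal_nonneg _ _ _)]
      rfl
    rw [h1 μ, h1 (fun i => μ i + δ i)]
    exact ENNReal.ofReal_le_ofReal (my_prod_pdf_ge μ δ x hvpos hx')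
  have one_sided : ∀ A : Set (Fin D → ℝ), MeasurableSet A →
      (q A).toReal - (p A).toReal ≤ (q S).toReal - (p S).toReal := by
    intro A hA
    have t1 : (q (A ∩ S)).toReal + (q (A \ S)).toReal = (q A).toReal := by
      rw [← ENNReal.toReal_add (measure_ne_top _ _) (measure_ne_top _ _),
        measure_inter_add_diff A hS]
    have t2 : (p (A ∩ S)).toReal + (p (A \ S)).toReal = (p A).toReal := by
      rw [← ENNReal.toReal_add (measure_ne_top _ _) (measure_ne_top _ _),
        measure_inter_add_diff A hS]
    have t3 : (q (A ∩ S)).toReal + (q (S \ A)).toReal = (q S).toReal := by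
      rw [← ENNReal.toReal_add (measure_ne_top _ _) (measure_ne_top _ _),
        Set.inter_comm, measure_inter_add_diff S hA]
    have t4 : (p (A ∩ S)).toReal + (p (S \ A)).toReal = (p S).toReal := by
      rw [← ENNReal.toReal_add (measure_ne_top _ _) (measure_ne_top _ _),
        Set.inter_comm, measure_inter_add_diff S hA]
    have a1 : (q (A \ S)).toReal ≤ (p (A \ S)).toReal :=
      ENNReal.toReal_mono (measure_ne_top _ _) (k2 _ (hA.diff hS) (fun x hx => hx.2))
    have a2 : (p (S \ A)).toReal ≤ (q (S \ A)).toReal :=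
      ENNReal.toReal_mono (measure_ne_top _ _) (k1 _ (hS.diff hA) Set.diff_subset)
    linarith
  have key : ∀ A : Set (Fin D → ℝ), MeasurableSet A →
      |(q A).toReal - (p A).toReal| ≤ (q S).toReal - (p S).toReal := by
    intro A hA
    rw [abs_sub_le_iff]
    refine ⟨one_sided A hA, ?_⟩
    have hpc : (p Aᶜ).toReal = 1 - (p A).toReal := by
      rw [measure_compl hA (measure_ne_top _ _), measure_univ,
        ENNReal.toReal_sub_of_le prob_le_one ENNReal.one_ne_top, ENNReal.toReal_one]
    have hqc : (q Aᶜ).toReal = 1 - (q A).toReal := by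
      rw [measure_compl hA (measure_ne_top _ _), measure_univ,
        ENNReal.toReal_sub_of_le prob_le_one ENNReal.one_ne_top, ENNReal.toReal_one]
    have := one_sided Aᶜ hA.compl
    linarith
  -- value of q S - p S
  set a : ℝ := Real.sqrt (∑ i, δ i ^ 2) / (2 * σ) with ha_def
  set val : ℝ := 2 * cdf (gaussianReal 0 1) a - 1 with hval_def
  have hval : (q S).toReal - (p S).toReal = val := by
    by_cases hδ0 : ∀ i, δ i = 0
    · have hqp : q = p := by
        rw [hq_def, hp_def]
        congr 1
        ext i : 1
        rw [hδ0 i, add_zero]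
      have hsum0 : (∑ i, δ i ^ 2) = 0 := by
        refine Finset.sum_eq_zero fun i _ => ?_
        rw [hδ0 i]; ring
      have ha0 : a = 0 := by rw [ha_def, hsum0, Real.sqrt_zero, zero_div]
      have hhalf : cdf (gaussianReal 0 1) (0:ℝ) = 1/2 := by
        have := my_std_symm 0
        rw [neg_zero] at this
        linarith
      rw [hqp, hval_def, ha0, hhalf]
      ring
    · push_neg at hδ0
      obtain ⟨j, hj⟩ := hδ0
      have hsumpos : (0:ℝ) < ∑ i, δ i ^ 2 :=
        Finset.sum_pos' (fun i _ => sq_nonneg _) ⟨j, Finset.mem_univ j, by positivity⟩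
      set N : ℝ := Real.sqrt (∑ i, δ i ^ 2) with hN_def
      have hN : 0 < N := Real.sqrt_pos.mpr hsumpos
      have hN2 : N ^ 2 = ∑ i, δ i ^ 2 := Real.sq_sqrt hsumpos.le
      set W : ℝ≥0 := ∑ i, (show ℝ≥0 from ⟨(δ i)^2, sq_nonneg _⟩) * v with hW_def
      have hWcoe : (W:ℝ) = (∑ i, δ i ^ 2) * σ ^ 2 := by
        rw [hW_def]
        rw [NNReal.coe_sum, Finset.sum_mul]
        exact Finset.sum_congr rfl fun i _ => rfl
      have hWpos : (0:ℝ) < (W:ℝ) := by rw [hWcoe]; positivity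
      have hW : W ≠ 0 := fun h => by rw [h] at hWpos; simp at hWpos
      have hsqrtW : Real.sqrt W = N * σ := by
        rw [hWcoe, hN_def, Real.sqrt_mul hsumpos.le, Real.sqrt_sq hσ.le]
      have hmapQ : q.map T = gaussianReal (∑ i, δ i * (μ i + δ i)) W := by
        rw [hq_def, hT_def, my_map_weighted_sum D δ (fun i => μ i + δ i) v]
      have hmapP : p.map T = gaussianReal (∑ i, δ i * μ i) W := by
        rw [hp_def, hT_def, my_map_weighted_sum D δ μ v]
      have hqS : (q S).toReal = 1 - cdf (gaussianReal 0 1)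
          ((cthr - ∑ i, δ i * (μ i + δ i)) / Real.sqrt W) := by
        rw [hS_def, ← Measure.map_apply hT measurableSet_Ioi, hmapQ, my_gaussian_Ioi _ _ hW]
      have hpS : (p S).toReal = 1 - cdf (gaussianReal 0 1)
          ((cthr - ∑ i, δ i * μ i) / Real.sqrt W) := by
        rw [hS_def, ← Measure.map_apply hT measurableSet_Ioi, hmapP, my_gaussian_Ioi _ _ hW]
      have hexpand : ∑ i, δ i * (μ i + δ i) = ∑ i, δ i * μ i + ∑ i, δ i ^ 2 := by
        rw [← Finset.sum_add_distrib]
        refine Finset.sum_congr rfl fun i _ => ?_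
        ring
      have harg_q : (cthr - ∑ i, δ i * (μ i + δ i)) / Real.sqrt W = -a := by
        rw [hexpand, hsqrtW, hcthr_def, ha_def]
        have hnum : ∑ i, δ i * μ i + (∑ i, δ i ^ 2)/2 - (∑ i, δ i * μ i + ∑ i, δ i ^ 2)
            = -(N^2)/2 := by rw [hN2]; ring
        rw [hnum]
        field_simp
      have harg_p : (cthr - ∑ i, δ i * μ i) / Real.sqrt W = a := by
        rw [hsqrtW, hcthr_def, ha_def]
        have hnum : ∑ i, δ i * μ i + (∑ i, δ i ^ 2)/2 - ∑ i, δ i * μ i = N^2/2 := by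
          rw [hN2]; ring
        rw [hnum]
        field_simp
      rw [hqS, hpS, harg_q, harg_p, my_std_symm a, hval_def]
      ring
  have hub : ∀ A : {s : Set (Fin D → ℝ) // MeasurableSet s},
      |(q (A : Set (Fin D → ℝ))).toReal - (p (A : Set (Fin D → ℝ))).toReal| ≤ val := by
    intro A
    rw [← hval]
    exact key A.1 A.2
  have hattain : |(q S).toReal - (p S).toReal| = val := by
    rw [abs_of_nonneg, hval]
    have : p S ≤ q S := k1 S hS subset_rfl
    have := ENNReal.toReal_mono (measure_ne_top _ _) this
    linarith
  have hsup : (⨆ A : {s : Set (Fin D → ℝ) // MeasurableSet s},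
      |(q (A : Set (Fin D → ℝ))).toReal - (p (A : Set (Fin D → ℝ))).toReal|) = val := by
    refine le_antisymm (ciSup_le hub) ?_
    rw [← hattain]
    exact le_ciSup ⟨val, Set.forall_mem_range.mpr hub⟩ (⟨S, hS⟩ : {s : Set (Fin D → ℝ) // MeasurableSet s})
  refine ⟨hsup, fun hε => ?_⟩
  rw [hsup, hval_def]
  have hε0 : 0 ≤ ε := le_trans (Finset.sum_nonneg fun i _ => abs_nonneg _) hε
  have hNle : Real.sqrt (∑ i, δ i ^ 2) ≤ ε := by
    have h1 : ∑ i, δ i ^ 2 ≤ (∑ i, |δ i|) ^ 2 := by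
      have := Finset.sum_sq_le_sq_sum_of_nonneg (f := fun i => |δ i|)
        (fun i _ => abs_nonneg (δ i)) (s := Finset.univ)
      simpa [sq_abs] using this
    calc Real.sqrt (∑ i, δ i ^ 2) ≤ Real.sqrt ((∑ i, |δ i|) ^ 2) := Real.sqrt_le_sqrt h1
      _ = ∑ i, |δ i| := Real.sqrt_sq (Finset.sum_nonneg fun i _ => abs_nonneg _)
      _ ≤ ε := hε
  have hmono : cdf (gaussianReal 0 1) a ≤ cdf (gaussianReal 0 1) (ε / (2 * σ)) := by
    apply monotone_cdf
    rw [ha_def]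
    gcongr
  linarith
end

section
/- Let (Ω, F, p) be a probability space, J : Ω → ℝ a bounded measurable function, and ε ≥ 0. Then for every ν > 0 and η ∈ ℝ satisfying η ≤ ν·(1/2 − ε) + J(ω) for p-almost every ω, and every measurable density z : Ω → [0,∞) with ∫_Ω z dp = 1 and ∫_Ω (1/2)·|z − 1| dp ≤ ε, one has η − ∫_Ω max(η + ν·ε − J, −ν/2) dp ≤ ∫_Ω z·J dp. Hence the supremum of the left-hand side over such feasible (ν, η) is a lower bound on the mean cumulative reward under any perturbation of p of total variation at most ε. -/
open MeasureTheory Set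

private lemma fenchel_aux (zv x ν : ℝ) (hz : 0 ≤ zv) (hν : 0 < ν)
    (hle : x ≤ ν / 2) :
    zv * x ≤ ν * ((1 / 2) * |zv - 1|) + max x (-(ν / 2)) := by
  rcases le_or_gt (-(ν / 2)) x with h | h
  · rw [max_eq_left h]
    rcases abs_cases (zv - 1) with ⟨he, _⟩ | ⟨he, _⟩ <;> nlinarith
  · rw [max_eq_right h.le]
    rcases abs_cases (zv - 1) with ⟨he, _⟩ | ⟨he, _⟩ <;> nlinarith

/-- **Total-variation certification bound (dual objective for `l₁` certification).**
For feasible `(ν, η)` and any density `z` whose total variation distance from `p`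
is at most `ε`, the dual objective is a lower bound on the perturbed mean reward. -/
theorem totalVariation_lower_bound
    {Ω : Type*} [MeasurableSpace Ω] (p : Measure Ω) [IsProbabilityMeasure p]
    (J : Ω → ℝ) (hJmeas : Measurable J) (C : ℝ) (hJbdd : ∀ ω, |J ω| ≤ C)
    (ε : ℝ) (hε : 0 ≤ ε)
    (ν : ℝ) (hν : 0 < ν) (η : ℝ)
    (hfeas : ∀ᵐ ω ∂p, η ≤ ν * (1 / 2 - ε) + J ω)
    (z : Ω → ℝ) (hzmeas : Measurable z) (hznonneg : ∀ ω, 0 ≤ z ω)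
    (hzone : (∫ ω, z ω ∂p) = 1)
    (hzdiv : (∫ ω, (1 / 2) * |z ω - 1| ∂p) ≤ ε) :
    η - (∫ ω, max (η + ν * ε - J ω) (-(ν / 2)) ∂p) ≤ ∫ ω, z ω * J ω ∂p := by
  -- integrability facts
  have hzint : Integrable z p := by
    by_contra h
    rw [integral_undef h] at hzone
    norm_num at hzone
  have habs : Integrable (fun ω => (1 / 2) * |z ω - 1|) p :=
    ((hzint.sub (integrable_const 1)).abs).const_mul _
  have hzJ : Integrable (fun ω => z ω * J ω) p := by
    refine Integrable.mono' (hzint.const_mul C)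
      (hzmeas.mul hJmeas).aestronglyMeasurable (ae_of_all _ fun ω => ?_)
    have h1 : |z ω * J ω| = z ω * |J ω| := by
      rw [abs_mul, abs_of_nonneg (hznonneg ω)]
    rw [Real.norm_eq_abs, h1]
    rw [mul_comm C]
    exact mul_le_mul_of_nonneg_left (hJbdd ω) (hznonneg ω)
  have hg : Integrable (fun ω => max (η + ν * ε - J ω) (-(ν / 2))) p := by
    refine Integrable.mono' (integrable_const (max (|η + ν * ε| + C) (ν / 2)))
      ((measurable_const.sub hJmeas).max measurable_const).aestronglyMeasurable
      (ae_of_all _ fun ω => ?_)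
    rw [Real.norm_eq_abs]
    refine (abs_max_le_max_abs_abs).trans (max_le_max ?_ ?_)
    · exact (abs_sub _ _).trans (add_le_add le_rfl (hJbdd ω))
    · rw [abs_neg, abs_of_nonneg (by linarith : (0:ℝ) ≤ ν / 2)]
  -- pointwise Fenchel inequality, a.e.
  have hpt : ∀ᵐ ω ∂p, z ω * (η + ν * ε - J ω) ≤
      ν * ((1 / 2) * |z ω - 1|) + max (η + ν * ε - J ω) (-(ν / 2)) := by
    filter_upwards [hfeas] with ω hω
    exact fenchel_aux (z ω) _ ν (hznonneg ω) hν (by linarith)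
  -- integrate
  have hlint : Integrable (fun ω => z ω * (η + ν * ε - J ω)) p := by
    have : (fun ω => z ω * (η + ν * ε - J ω))
        = fun ω => (η + ν * ε) * z ω - z ω * J ω := by
      funext ω; ring
    rw [this]
    exact (hzint.const_mul _).sub hzJ
  have hrint : Integrable (fun ω => ν * ((1 / 2) * |z ω - 1|)
      + max (η + ν * ε - J ω) (-(ν / 2))) p := (habs.const_mul ν).add hg
  have key := integral_mono_ae hlint hrint hpt
  have hL : (∫ ω, z ω * (η + ν * ε - J ω) ∂p)
      = (η + ν * ε) - ∫ ω, z ω * J ω ∂p := by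
    have : (fun ω => z ω * (η + ν * ε - J ω))
        = fun ω => (η + ν * ε) * z ω - z ω * J ω := by
      funext ω; ring
    rw [this, integral_sub (hzint.const_mul _) hzJ, integral_const_mul, hzone,
      mul_one]
  have hR : (∫ ω, (ν * ((1 / 2) * |z ω - 1|)
      + max (η + ν * ε - J ω) (-(ν / 2))) ∂p)
      = ν * (∫ ω, (1 / 2) * |z ω - 1| ∂p)
        + ∫ ω, max (η + ν * ε - J ω) (-(ν / 2)) ∂p := by
    rw [integral_add (habs.const_mul ν) hg, integral_const_mul]
  rw [hL, hR] at key
  nlinarith [mul_le_mul_of_nonneg_left hzdiv hν.le]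
end
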